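/- Assume ∫ π_β (|ℓ| + |log q₀|) dμ < ∞ for every β ∈ [0,1], and assume η ↦ Z_η is twice continuously differentiable on [0,1] with derivatives given by differentiation under the integral sign, i.e., Z′_η = ∫ γ_η ℓ dμ and Z″_η = ∫ γ_η ℓ² dμ, both finite and continuous in η. Then the AIS gap under perfect transitions with equally spaced temperatures β_k = k/K satisfies lim_{K→∞} K · ∑_{k=1}^{K} D_KL(π_{(k−1)/K} ‖ π_{k/K}) = (1/2) D_KL(p ‖ q₀) + (1/2) D_KL(q₀ ‖ p), i.e., in the limit of many transitions the gap is, to leading order 1/K, proportional to the symmetrized Kullback–Leibler divergence between the initial distribution q₀ and the target distribution p. -/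

import Mathlib

open MeasureTheory Real Filter

noncomputable section

variable {X : Type*} [MeasurableSpace X]

/-- Geometric annealing path `γ_η = q₀^{1-η} p^η`, set to `0` where `q₀` vanishes. -/
def gammaPath (q0 p : X → ℝ) (η : ℝ) (z : X) : ℝ :=
  if q0 z = 0 then 0 else q0 z ^ (1 - η) * p z ^ η

/-- Normalization constant `Z_η = ∫ γ_η dμ` along the annealing path. -/
def Zpath (μ : Measure X) (q0 p : X → ℝ) (η : ℝ) : ℝ :=
  ∫ z, gammaPath q0 p η z ∂μ

/-- Normalized annealing density `π_η = γ_η / Z_η`. -/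
def piPath (μ : Measure X) (q0 p : X → ℝ) (η : ℝ) (z : X) : ℝ :=
  gammaPath q0 p η z / Zpath μ q0 p η

/-- Kullback–Leibler divergence `D_KL(a‖b) = ∫ a log(a/b) dμ` between densities. -/
def KLdiv (μ : Measure X) (a b : X → ℝ) : ℝ :=
  ∫ z, a z * Real.log (a z / b z) ∂μ


/-- `ℓ = log(p/q₀)`. -/
def ell (q0 p : X → ℝ) (z : X) : ℝ := Real.log (p z / q0 z)

/-!
Where `q₀` and `p` are positive, `log (π_a / π_b) = (a - b) ℓ + L(b) - L(a)` with `L = log Z`,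
so `D_KL(π_a ‖ π_b) = L(b) - L(a) - (b - a) L'(a)`, where `L' = Z' / Z`. The scaled sum is thus
`K` times the total left-endpoint error of `L` on the uniform mesh. The trapezoid rule has error
`o(K⁻²)` per cell because `L''` is uniformly continuous, and the two rules differ by
`(L'(1) - L'(0)) / (2K) = (D_KL(p‖q₀) + D_KL(q₀‖p)) / (2K)`.

The identity at `a = 0` needs `p > 0` a.e. where `q₀ > 0`: on `{q₀ > 0 = p}` we have `γ₀ = q₀` but
`γ_η = 0` for `η > 0`. Weighted AM–GM gives `Z_η ≤ (1 - η) ∫_{p ≠ 0} q₀ + η`, so continuity of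
`Z` at `0` forces `∫_{p = 0} q₀ = 0`.
-/

open Set Topology

theorem abs_sub_sub_mul_le_of_hasDerivWithinAt {g h : ℝ → ℝ} {a b ε : ℝ}
    (hg : ∀ x ∈ Icc a b, HasDerivWithinAt g (h x) (Icc a b) x)
    (hh : ∀ x ∈ Icc a b, |h x - h a| ≤ ε) :
    ∀ x ∈ Icc a b, |g x - g a - h a * (x - a)| ≤ ε * (x - a) := by
  have hderiv : ∀ x ∈ Icc a b,
      HasDerivWithinAt (fun y => g y - h a * y) (h x - h a) (Icc a b) x := fun x hx =>
    ((hg x hx).sub ((hasDerivAt_id' x).hasDerivWithinAt.const_mul (h a))).congr_deriv (by ring)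
  intro x hx
  have := norm_image_sub_le_of_norm_deriv_le_segment' hderiv
    (fun y hy => hh y (Ico_subset_Icc_self hy)) x hx
  simp only [Real.norm_eq_abs] at this
  convert this using 2
  ring

theorem abs_sub_trapezoid_le {f g h : ℝ → ℝ} {a b ε : ℝ} (hab : a ≤ b)
    (hf : ∀ x ∈ Icc a b, HasDerivWithinAt f (g x) (Icc a b) x)
    (hg : ∀ x ∈ Icc a b, HasDerivWithinAt g (h x) (Icc a b) x)
    (hh : ∀ x ∈ Icc a b, |h x - h a| ≤ ε) :
    |f b - f a - (b - a) * (g a + g b) / 2| ≤ 2 * ε * (b - a) ^ 2 := by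
  have hε : 0 ≤ ε := (abs_nonneg _).trans (hh a (left_mem_Icc.2 hab))
  have hg_lin := abs_sub_sub_mul_le_of_hasDerivWithinAt hg hh
  have hderiv : ∀ x ∈ Icc a b, HasDerivWithinAt
      (fun y => f y - g a * y - h a * (y - a) ^ 2 / 2) (g x - g a - h a * (x - a)) (Icc a b) x :=
    fun x hx => (((hf x hx).sub ((hasDerivAt_id' x).hasDerivWithinAt.const_mul (g a))).sub
      ((((hasDerivAt_id' x).hasDerivWithinAt.sub_const a).pow 2).const_mul (h a)
        |>.div_const 2)).congr_deriv (by ring)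
  have hf_quad := norm_image_sub_le_of_norm_deriv_le_segment' (C := ε * (b - a)) hderiv
    (fun x hx => by
      rw [Real.norm_eq_abs]
      exact (hg_lin x (Ico_subset_Icc_self hx)).trans
        (mul_le_mul_of_nonneg_left (by linarith [hx.2.le]) hε))
    b (right_mem_Icc.2 hab)
  simp only [Real.norm_eq_abs] at hf_quad
  have hgb := hg_lin b (right_mem_Icc.2 hab)
  -- the trapezoid error is the quadratic Taylor error minus `(b - a) / 2` times the linear one
  have hsplit : f b - f a - (b - a) * (g a + g b) / 2 =
      (f b - g a * b - h a * (b - a) ^ 2 / 2 - (f a - g a * a - h a * (a - a) ^ 2 / 2))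
        - (b - a) / 2 * (g b - g a - h a * (b - a)) := by ring
  rw [hsplit]
  calc _ ≤ |f b - g a * b - h a * (b - a) ^ 2 / 2 - (f a - g a * a - h a * (a - a) ^ 2 / 2)|
        + |(b - a) / 2 * (g b - g a - h a * (b - a))| := abs_sub _ _
    _ ≤ ε * (b - a) * (b - a) + (b - a) / 2 * (ε * (b - a)) := by
        rw [abs_mul, abs_of_nonneg (by linarith : 0 ≤ (b - a) / 2)]
        gcongr
    _ ≤ 2 * ε * (b - a) ^ 2 := by nlinarith [mul_nonneg hε (sq_nonneg (b - a))]

theorem Finset.sum_Icc_one_sub_sub_one (u : ℝ → ℝ) (K : ℕ) :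
    ∑ k ∈ Finset.Icc 1 K, (u k - u (k - 1)) = u K - u 0 := by
  induction K with
  | zero => simp
  | succ K ih =>
    rw [Finset.sum_Icc_succ_top (by omega), ih]
    push_cast
    rw [add_sub_cancel_right]
    ring

theorem sub_one_div_mem_Icc_and_div_mem_Icc {k K : ℕ} (hk : k ∈ Finset.Icc 1 K) :
    ((k : ℝ) - 1) / K ∈ Icc (0 : ℝ) 1 ∧ (k : ℝ) / K ∈ Icc (0 : ℝ) 1 := by
  obtain ⟨hk1, hkK⟩ := Finset.mem_Icc.1 hk
  have hk1' : (1 : ℝ) ≤ k := by exact_mod_cast hk1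
  have hkK' : (k : ℝ) ≤ K := by exact_mod_cast hkK
  have hK : (0 : ℝ) < K := by linarith
  refine ⟨⟨by positivity, ?_⟩, ⟨by positivity, ?_⟩⟩ <;>
    rw [div_le_one hK] <;> linarith

theorem tendsto_mul_sum_trapezoid_error {f g h : ℝ → ℝ}
    (hf : ∀ x ∈ Icc (0 : ℝ) 1, HasDerivWithinAt f (g x) (Icc 0 1) x)
    (hg : ∀ x ∈ Icc (0 : ℝ) 1, HasDerivWithinAt g (h x) (Icc 0 1) x)
    (hh : ContinuousOn h (Icc 0 1)) :
    Tendsto (fun K : ℕ => (K : ℝ) * ∑ k ∈ Finset.Icc 1 K,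
      (f (k / K) - f ((k - 1) / K) - (k / K - (k - 1) / K) * (g ((k - 1) / K) + g (k / K)) / 2))
      atTop (𝓝 0) := by
  rw [Metric.tendsto_atTop]
  intro ε hε
  obtain ⟨δ, hδ, hUC⟩ := Metric.uniformContinuousOn_iff_le.1
    (isCompact_Icc.uniformContinuousOn_of_continuous hh) (ε / 4) (by positivity)
  obtain ⟨N, hN⟩ := exists_nat_one_div_lt hδ
  refine ⟨N + 1, fun K hK => ?_⟩
  have hKpos : (0 : ℝ) < K := Nat.cast_pos.2 (by omega)
  have hmesh : 1 / (K : ℝ) ≤ δ := by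
    refine le_trans ?_ hN.le
    gcongr
    exact_mod_cast hK
  have hterm : ∀ k ∈ Finset.Icc 1 K,
      |f (k / K) - f ((k - 1) / K) - (k / K - (k - 1) / K) * (g ((k - 1) / K) + g (k / K)) / 2|
        ≤ 2 * (ε / 4) * (1 / K) ^ 2 := by
    intro k hk
    obtain ⟨ha, hb⟩ := sub_one_div_mem_Icc_and_div_mem_Icc hk
    have hstep : (k : ℝ) / K - (k - 1) / K = 1 / K := by ring
    have hsub : Icc (((k : ℝ) - 1) / K) (k / K) ⊆ Icc 0 1 := Icc_subset_Icc ha.1 hb.2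
    rw [← hstep]
    refine abs_sub_trapezoid_le (by linarith [hstep, one_div_pos.2 hKpos])
      (fun x hx => (hf x (hsub hx)).mono hsub) (fun x hx => (hg x (hsub hx)).mono hsub)
      (fun x hx => ?_)
    refine hUC x (hsub hx) _ ha ?_
    rw [Real.dist_eq, abs_of_nonneg (by linarith [hx.1])]
    linarith [hx.2]
  rw [Real.dist_eq, sub_zero, abs_mul, abs_of_pos hKpos]
  calc (K : ℝ) * |∑ k ∈ Finset.Icc 1 K, _|
      ≤ K * ∑ _k ∈ Finset.Icc 1 K, 2 * (ε / 4) * (1 / (K : ℝ)) ^ 2 := by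
        gcongr
        exact (Finset.abs_sum_le_sum_abs _ _).trans (Finset.sum_le_sum hterm)
    _ = ε / 2 := by
        rw [Finset.sum_const, Nat.card_Icc, Nat.add_sub_cancel, nsmul_eq_mul]
        field_simp
        ring
    _ < ε := by linarith

theorem tendsto_mul_sum_left_endpoint_error {f g h : ℝ → ℝ}
    (hf : ∀ x ∈ Icc (0 : ℝ) 1, HasDerivWithinAt f (g x) (Icc 0 1) x)
    (hg : ∀ x ∈ Icc (0 : ℝ) 1, HasDerivWithinAt g (h x) (Icc 0 1) x)
    (hh : ContinuousOn h (Icc 0 1)) :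
    Tendsto (fun K : ℕ => (K : ℝ) * ∑ k ∈ Finset.Icc 1 K,
      (f (k / K) - f ((k - 1) / K) - (k / K - (k - 1) / K) * g ((k - 1) / K)))
      atTop (𝓝 ((g 1 - g 0) / 2)) := by
  have htrap := (tendsto_mul_sum_trapezoid_error hf hg hh).add_const ((g 1 - g 0) / 2)
  rw [zero_add] at htrap
  refine htrap.congr' ?_
  filter_upwards [eventually_ge_atTop 1] with K hK1
  have hK : (K : ℝ) ≠ 0 := by positivity
  have hsplit : ∀ k ∈ Finset.Icc 1 K,
      f (k / K) - f ((k - 1) / K) - (k / K - (k - 1) / K) * g ((k - 1) / K) =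
        f (k / K) - f ((k - 1) / K) - (k / K - (k - 1) / K) * (g ((k - 1) / K) + g (k / K)) / 2
          + (g (k / K) - g ((k - 1) / K)) / (2 * K) := fun k _ => by ring
  rw [Finset.sum_congr rfl hsplit, Finset.sum_add_distrib, ← Finset.sum_div,
    Finset.sum_Icc_one_sub_sub_one (fun x => g (x / K)), mul_add, zero_div, div_self hK]
  congr 1
  field_simp

section AnnealingPath

variable {μ : Measure X} {q0 p : X → ℝ}

omit [MeasurableSpace X] in
theorem gammaPath_zero : gammaPath q0 p 0 = q0 := by
  funext z
  by_cases hq : q0 z = 0 <;> simp [gammaPath, hq]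

theorem gammaPath_one_ae_eq (hpnn : ∀ z, 0 ≤ p z) (hsupp : ∀ᵐ z ∂μ, 0 < p z → 0 < q0 z) :
    gammaPath q0 p 1 =ᵐ[μ] p := by
  filter_upwards [hsupp] with z hz
  by_cases hq : q0 z = 0
  · simp only [gammaPath, if_pos hq]
    by_contra hp
    exact (hz ((hpnn z).lt_of_ne hp)).ne' hq
  · simp [gammaPath, hq]

omit [MeasurableSpace X] in
theorem log_gammaPath (η : ℝ) {z : X} (hq : 0 < q0 z) (hp : 0 < p z) :
    Real.log (gammaPath q0 p η z) = Real.log (q0 z) + η * ell q0 p z := by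
  rw [gammaPath, if_neg hq.ne', Real.log_mul (by positivity) (by positivity),
    Real.log_rpow hq, Real.log_rpow hp, ell, Real.log_div hp.ne' hq.ne']
  ring

omit [MeasurableSpace X] in
theorem gammaPath_le_weighted_sum (hq0nn : ∀ z, 0 ≤ q0 z) (hpnn : ∀ z, 0 ≤ p z) {η : ℝ}
    (hη : η ∈ Ioc 0 1) (z : X) :
    gammaPath q0 p η z ≤ (1 - η) * {z | p z ≠ 0}.indicator q0 z + η * p z := by
  have hrhs : 0 ≤ (1 - η) * {z | p z ≠ 0}.indicator q0 z + η * p z :=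
    add_nonneg (mul_nonneg (by linarith [hη.2]) (Set.indicator_nonneg (fun z _ => hq0nn z) z))
      (mul_nonneg hη.1.le (hpnn z))
  by_cases hq : q0 z = 0
  · simp [gammaPath, hq, hrhs]
  by_cases hp : p z = 0
  · simp [gammaPath, hq, hp, Real.zero_rpow hη.1.ne']
  rw [gammaPath, if_neg hq, Set.indicator_of_mem (show z ∈ {z | p z ≠ 0} from hp)]
  exact Real.geom_mean_le_arith_mean2_weighted (by linarith [hη.2]) hη.1.le (hq0nn z) (hpnn z)
    (by ring)

theorem integral_piPath {η : ℝ} (hZ : Zpath μ q0 p η ≠ 0) : ∫ z, piPath μ q0 p η z ∂μ = 1 := by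
  simp only [piPath]
  rw [integral_div]
  exact div_self hZ

theorem ae_pos_of_pos_of_continuousWithinAt_Zpath (hpm : Measurable p)
    (hq0nn : ∀ z, 0 ≤ q0 z) (hpnn : ∀ z, 0 ≤ p z)
    (hq0one : ∫ z, q0 z ∂μ = 1) (hpone : ∫ z, p z ∂μ = 1) (hpint : Integrable p μ)
    (hγ : ∀ η ∈ Icc (0 : ℝ) 1, Integrable (gammaPath q0 p η) μ)
    (hZ : ContinuousWithinAt (Zpath μ q0 p) (Icc 0 1) 0) :
    ∀ᵐ z ∂μ, 0 < q0 z → 0 < p z := by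
  set G := {z | p z ≠ 0}.indicator q0
  have hq0int : Integrable q0 μ := by
    simpa only [gammaPath_zero] using hγ 0 (left_mem_Icc.2 zero_le_one)
  have hGint : Integrable G μ :=
    hq0int.indicator (hpm (measurableSet_singleton 0)).compl
  have hZle : ∀ η ∈ Ioc (0 : ℝ) 1, Zpath μ q0 p η ≤ (1 - η) * ∫ z, G z ∂μ + η := by
    intro η hη
    calc Zpath μ q0 p η ≤ ∫ z, ((1 - η) * G z + η * p z) ∂μ :=
          integral_mono (hγ η (Ioc_subset_Icc_self hη))
            ((hGint.const_mul _).add (hpint.const_mul _)) (gammaPath_le_weighted_sum hq0nn hpnn hη)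
      _ = (1 - η) * ∫ z, G z ∂μ + η := by
          rw [integral_add (hGint.const_mul _) (hpint.const_mul _), integral_const_mul,
            integral_const_mul, hpone, mul_one]
  have hZlim : Tendsto (Zpath μ q0 p) (𝓝[>] 0) (𝓝 1) := by
    have := (hZ.mono Ioc_subset_Icc_self).tendsto
    rwa [nhdsWithin_Ioc_eq_nhdsGT zero_lt_one, Zpath, gammaPath_zero, hq0one] at this
  have hbound_lim : Tendsto (fun η : ℝ => (1 - η) * ∫ z, G z ∂μ + η) (𝓝[>] 0)
      (𝓝 (∫ z, G z ∂μ)) := by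
    have : Continuous fun η : ℝ => (1 - η) * ∫ z, G z ∂μ + η := by fun_prop
    simpa using this.tendsto 0 |>.mono_left nhdsWithin_le_nhds
  have hGge : 1 ≤ ∫ z, G z ∂μ :=
    le_of_tendsto_of_tendsto hZlim hbound_lim
      (Filter.Eventually.mono (Ioc_mem_nhdsGT zero_lt_one) hZle)
  have hdiff_nonneg : 0 ≤ q0 - G := fun z => by
    simp only [Pi.sub_apply, Pi.zero_apply, sub_nonneg]
    exact Set.indicator_le_self' (fun z _ => hq0nn z) z
  have hdiff_zero : q0 - G =ᵐ[μ] 0 := by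
    refine (integral_eq_zero_iff_of_nonneg hdiff_nonneg (hq0int.sub hGint)).1 ?_
    have : ∫ z, (q0 - G) z ∂μ ≤ 0 := by
      rw [Pi.sub_def, integral_sub hq0int hGint, hq0one]; linarith
    exact le_antisymm this (integral_nonneg hdiff_nonneg)
  filter_upwards [hdiff_zero] with z hz hq
  refine (hpnn z).lt_of_ne fun hp => hq.ne' ?_
  simpa [G, ← hp] using hz

theorem KLdiv_piPath (hq0nn : ∀ z, 0 ≤ q0 z) (hpos : ∀ᵐ z ∂μ, 0 < q0 z → 0 < p z) {a b : ℝ}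
    (hZa : 0 < Zpath μ q0 p a) (hZb : 0 < Zpath μ q0 p b)
    (hγa : Integrable (gammaPath q0 p a) μ)
    (hγℓa : Integrable (fun z => gammaPath q0 p a z * ell q0 p z) μ) :
    KLdiv μ (piPath μ q0 p a) (piPath μ q0 p b) =
      Real.log (Zpath μ q0 p b) - Real.log (Zpath μ q0 p a)
        - (b - a) * ((∫ z, gammaPath q0 p a z * ell q0 p z ∂μ) / Zpath μ q0 p a) := by
  have hae : (fun z => piPath μ q0 p a z * Real.log (piPath μ q0 p a z / piPath μ q0 p b z))
      =ᵐ[μ] fun z => (Real.log (Zpath μ q0 p b) - Real.log (Zpath μ q0 p a)) * piPath μ q0 p a z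
        - (b - a) * (gammaPath q0 p a z * ell q0 p z / Zpath μ q0 p a) := by
    filter_upwards [hpos] with z hz
    rcases (hq0nn z).lt_or_eq with hq | hq
    · have hp := hz hq
      have hγpos (η : ℝ) : 0 < gammaPath q0 p η z := by
        rw [gammaPath, if_neg hq.ne']; positivity
      simp only [piPath]
      rw [Real.log_div (div_pos (hγpos a) hZa).ne' (div_pos (hγpos b) hZb).ne',
        Real.log_div (hγpos a).ne' hZa.ne', Real.log_div (hγpos b).ne' hZb.ne',
        log_gammaPath a hq hp, log_gammaPath b hq hp]
      ring
    · simp [piPath, gammaPath, ← hq]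
  have hπa : Integrable (piPath μ q0 p a) μ := hγa.div_const _
  rw [KLdiv, integral_congr_ae hae, integral_sub (hπa.const_mul _)
    ((hγℓa.div_const _).const_mul _), integral_const_mul, integral_const_mul,
    integral_piPath hZa.ne', integral_div, mul_one]

theorem integral_gammaPath_one_mul_ell (hpnn : ∀ z, 0 ≤ p z)
    (hsupp : ∀ᵐ z ∂μ, 0 < p z → 0 < q0 z) :
    ∫ z, gammaPath q0 p 1 z * ell q0 p z ∂μ = KLdiv μ p q0 :=
  integral_congr_ae ((gammaPath_one_ae_eq hpnn hsupp).mul EventuallyEq.rfl)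

theorem integral_gammaPath_zero_mul_ell :
    ∫ z, gammaPath q0 p 0 z * ell q0 p z ∂μ = -KLdiv μ q0 p := by
  rw [gammaPath_zero, KLdiv, ← integral_neg]
  congr 1 with z
  rw [ell, ← inv_div, Real.log_inv]
  ring

end AnnealingPath

theorem ais_gap_tendsto_symmetrized_kl_general
    (μ : Measure X) (q0 p : X → ℝ)
    (hq0nn : ∀ z, 0 ≤ q0 z) (hq0one : ∫ z, q0 z ∂μ = 1)
    (hpm : Measurable p) (hpnn : ∀ z, 0 ≤ p z) (hpone : ∫ z, p z ∂μ = 1)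
    (hsupp : ∀ᵐ z ∂μ, 0 < p z → 0 < q0 z)
    (hZ : ∀ η ∈ Set.Icc (0 : ℝ) 1,
      Integrable (gammaPath q0 p η) μ ∧ 0 < Zpath μ q0 p η)
    (hZ' : ∀ η ∈ Set.Icc (0 : ℝ) 1,
      Integrable (fun z => gammaPath q0 p η z * ell q0 p z) μ ∧
      HasDerivWithinAt (Zpath μ q0 p)
        (∫ z, gammaPath q0 p η z * ell q0 p z ∂μ) (Set.Icc 0 1) η)
    (hZ'' : ∀ η ∈ Set.Icc (0 : ℝ) 1,
      Integrable (fun z => gammaPath q0 p η z * ell q0 p z ^ 2) μ ∧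
      HasDerivWithinAt (fun t => ∫ z, gammaPath q0 p t z * ell q0 p z ∂μ)
        (∫ z, gammaPath q0 p η z * ell q0 p z ^ 2 ∂μ) (Set.Icc 0 1) η)
    (hZ''cont : ContinuousOn
      (fun η => ∫ z, gammaPath q0 p η z * ell q0 p z ^ 2 ∂μ) (Set.Icc 0 1)) :
    Filter.Tendsto
      (fun K : ℕ => (K : ℝ) *
        ∑ k ∈ Finset.Icc 1 K,
          KLdiv μ (piPath μ q0 p (((k : ℝ) - 1) / K)) (piPath μ q0 p ((k : ℝ) / K)))
      Filter.atTop
      (nhds (1 / 2 * KLdiv μ p q0 + 1 / 2 * KLdiv μ q0 p)) := by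
  set Z := Zpath μ q0 p
  set Z' := fun η => ∫ z, gammaPath q0 p η z * ell q0 p z ∂μ
  have hZpos : ∀ η ∈ Icc (0 : ℝ) 1, 0 < Z η := fun η hη => (hZ η hη).2
  have hZc : ContinuousOn Z (Icc 0 1) := fun η hη => (hZ' η hη).2.continuousWithinAt
  have hZ'c : ContinuousOn Z' (Icc 0 1) := fun η hη => (hZ'' η hη).2.continuousWithinAt
  have hpos : ∀ᵐ z ∂μ, 0 < q0 z → 0 < p z :=
    ae_pos_of_pos_of_continuousWithinAt_Zpath hpm hq0nn hpnn hq0one hpone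
      ((hZ 1 (right_mem_Icc.2 zero_le_one)).1.congr (gammaPath_one_ae_eq hpnn hsupp))
      (fun η hη => (hZ η hη).1) (hZc 0 (left_mem_Icc.2 zero_le_one))
  have hlim := tendsto_mul_sum_left_endpoint_error
    (f := fun η => Real.log (Z η)) (g := fun η => Z' η / Z η)
    (fun η hη => (hZ' η hη).2.log (hZpos η hη).ne')
    (fun η hη => (hZ'' η hη).2.div (hZ' η hη).2 (hZpos η hη).ne')
    (((hZ''cont.mul hZc).sub (hZ'c.mul hZ'c)).div (hZc.pow 2)
      fun η hη => pow_ne_zero 2 (hZpos η hη).ne')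
  have hZ0 : Z 0 = 1 := by simp only [Z, Zpath, gammaPath_zero, hq0one]
  have hZ1 : Z 1 = 1 := (integral_congr_ae (gammaPath_one_ae_eq hpnn hsupp)).trans hpone
  have hends : (Z' 1 / Z 1 - Z' 0 / Z 0) / 2 = 1 / 2 * KLdiv μ p q0 + 1 / 2 * KLdiv μ q0 p := by
    simp only [Z', hZ0, hZ1, integral_gammaPath_one_mul_ell hpnn hsupp,
      integral_gammaPath_zero_mul_ell]
    ring
  rw [hends] at hlim
  refine hlim.congr fun K => congrArg _ (Finset.sum_congr rfl fun k hk => ?_)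
  obtain ⟨ha, hb⟩ := sub_one_div_mem_Icc_and_div_mem_Icc hk
  exact (KLdiv_piPath hq0nn hpos (hZpos _ ha) (hZpos _ hb) (hZ _ ha).1 (hZ' _ ha).1).symm

/-- In the limit of many transitions with equally spaced temperatures
`β_k = k/K`, `K` times the AIS gap under perfect transitions converges to the
symmetrized KL divergence `(1/2) D_KL(p‖q₀) + (1/2) D_KL(q₀‖p)`. -/
theorem ais_gap_tendsto_symmetrized_kl
    (μ : Measure X) [SigmaFinite μ] (q0 p : X → ℝ)
    (hq0m : Measurable q0) (hq0nn : ∀ z, 0 ≤ q0 z) (hq0one : ∫ z, q0 z ∂μ = 1)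
    (hpm : Measurable p) (hpnn : ∀ z, 0 ≤ p z) (hpone : ∫ z, p z ∂μ = 1)
    (hsupp : ∀ᵐ z ∂μ, 0 < p z → 0 < q0 z)
    (hZ : ∀ η ∈ Set.Icc (0 : ℝ) 1,
      Integrable (gammaPath q0 p η) μ ∧ 0 < Zpath μ q0 p η)
    (hπint : ∀ β ∈ Set.Icc (0 : ℝ) 1,
      Integrable (fun z => piPath μ q0 p β z * (|ell q0 p z| + |Real.log (q0 z)|)) μ)
    (hZ' : ∀ η ∈ Set.Icc (0 : ℝ) 1,
      Integrable (fun z => gammaPath q0 p η z * ell q0 p z) μ ∧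
      HasDerivWithinAt (Zpath μ q0 p)
        (∫ z, gammaPath q0 p η z * ell q0 p z ∂μ) (Set.Icc 0 1) η)
    (hZ'' : ∀ η ∈ Set.Icc (0 : ℝ) 1,
      Integrable (fun z => gammaPath q0 p η z * ell q0 p z ^ 2) μ ∧
      HasDerivWithinAt (fun t => ∫ z, gammaPath q0 p t z * ell q0 p z ∂μ)
        (∫ z, gammaPath q0 p η z * ell q0 p z ^ 2 ∂μ) (Set.Icc 0 1) η)
    (hZ'cont : ContinuousOn
      (fun η => ∫ z, gammaPath q0 p η z * ell q0 p z ∂μ) (Set.Icc 0 1))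
    (hZ''cont : ContinuousOn
      (fun η => ∫ z, gammaPath q0 p η z * ell q0 p z ^ 2 ∂μ) (Set.Icc 0 1)) :
    Filter.Tendsto
      (fun K : ℕ => (K : ℝ) *
        ∑ k ∈ Finset.Icc 1 K,
          KLdiv μ (piPath μ q0 p (((k : ℝ) - 1) / K)) (piPath μ q0 p ((k : ℝ) / K)))
      Filter.atTop
      (nhds (1 / 2 * KLdiv μ p q0 + 1 / 2 * KLdiv μ q0 p)) :=
  ais_gap_tendsto_symmetrized_kl_general μ q0 p hq0nn hq0one hpm hpnn hpone hsupp hZ hZ' hZ''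
    hZ''cont
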